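/- Fix β > 0, J > 0, J₀ ∈ ℝ, h ∈ ℝ, and define F : ℝ → ℝ by F(u) := −βJu²/2 + log( cosh(βJu + βh) + √( sinh(βJu + βh)² + e^{−4βJ₀} ) ). Then F is differentiable on ℝ, and every critical point u* of F (F′(u*) = 0) satisfies the generalized Curie–Weiss mean-field equation u* = sinh(βJu* + βh) / √( sinh(βJu* + βh)² + e^{−4βJ₀} ). -/

import Mathlib

open Real

/-!
`rateF'(u) = βJ (m₀(βJu + βh) - u)` with `m₀ x = sinh x / √(sinh² x + e^{-4βJ₀})`, because
`x ↦ log (cosh x + √(sinh² x + c))`, the log of the top eigenvalue of the transfer matrix,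
has derivative `sinh x / √(sinh² x + c)`: the `cosh`-terms cancel against the denominator.
Since `βJ ≠ 0`, critical points are exactly the solutions of `u = m₀(βJu + βh)`.
-/

noncomputable def rateF (β J J₀ h : ℝ) (u : ℝ) : ℝ :=
  -(β * J * u ^ 2) / 2 +
    Real.log (Real.cosh (β * J * u + β * h) +
      Real.sqrt ((Real.sinh (β * J * u + β * h)) ^ 2 + Real.exp (-(4 * β * J₀))))

theorem hasDerivAt_log_cosh_add_sqrt_sinh_sq_add {c : ℝ} (hc : 0 < c) (x : ℝ) :
    HasDerivAt (fun x => log (cosh x + √(sinh x ^ 2 + c))) (sinh x / √(sinh x ^ 2 + c)) x := by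
  have hQ : 0 < √(sinh x ^ 2 + c) := sqrt_pos.mpr (by positivity)
  have hpos : 0 < cosh x + √(sinh x ^ 2 + c) := by linarith [one_le_cosh x]
  have hsq : HasDerivAt (fun x => sinh x ^ 2 + c) (2 * sinh x ^ 1 * cosh x) x :=
    ((hasDerivAt_sinh x).pow 2).add_const c
  have hsum : HasDerivAt (fun x => cosh x + √(sinh x ^ 2 + c))
      (sinh x + 2 * sinh x ^ 1 * cosh x / (2 * √(sinh x ^ 2 + c))) x :=
    (hasDerivAt_cosh x).add (hsq.sqrt (by positivity))
  convert hsum.log hpos.ne' using 1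
  field_simp
  ring

theorem hasDerivAt_rateF (β J J₀ h u : ℝ) :
    HasDerivAt (rateF β J J₀ h)
      (β * J * (sinh (β * J * u + β * h) /
        √(sinh (β * J * u + β * h) ^ 2 + exp (-(4 * β * J₀))) - u)) u := by
  have hx : HasDerivAt (fun u => β * J * u + β * h) (β * J) u := by
    simpa using ((hasDerivAt_id u).const_mul (β * J)).add_const (β * h)
  have hquad : HasDerivAt (fun u => -(β * J * u ^ 2) / 2) (-(β * J * u)) u :=
    (((hasDerivAt_pow 2 u).const_mul (β * J)).neg.div_const 2).congr_deriv (by ring)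
  exact (hquad.add ((hasDerivAt_log_cosh_add_sqrt_sinh_sq_add
    (exp_pos (-(4 * β * J₀))) _).comp u hx)).congr_deriv (by ring)

/-- `F` is differentiable, and every critical point `u*` of `F` satisfies the
generalized Curie–Weiss mean-field equation
`u* = sinh(βJu*+βh)/√(sinh(βJu*+βh)² + e^{-4βJ₀})`. -/
theorem critical_points_satisfy_mean_field
    (β J J₀ h : ℝ) (hβ : 0 < β) (hJ : 0 < J) :
    Differentiable ℝ (rateF β J J₀ h) ∧
      ∀ u : ℝ, deriv (rateF β J J₀ h) u = 0 →
        u = Real.sinh (β * J * u + β * h) /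
              Real.sqrt ((Real.sinh (β * J * u + β * h)) ^ 2 + Real.exp (-(4 * β * J₀))) := by
  refine ⟨fun u => (hasDerivAt_rateF β J J₀ h u).differentiableAt, fun u hu => ?_⟩
  rw [(hasDerivAt_rateF β J J₀ h u).deriv] at hu
  have hβJ : β * J ≠ 0 := by positivity
  exact (sub_eq_zero.mp ((mul_eq_zero.mp hu).resolve_left hβJ)).symm
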